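/- Convergence of variational denoising for vanishing noise: let v⁰ ∈ A satisfy R(v⁰) < ∞, where R(w) := ∫_{Ω×Ω} d(w(x),w(y))^p · ρ(x−y) / ‖x−y‖^{N+ps} d(x,y). Let α : (0,∞) → (0,∞) satisfy α(δ) → 0 and δ^p/α(δ) → 0 as δ → 0. Let (δ_n) be a sequence of positive reals converging to 0, and let (v_n) be a sequence in A with ∫_Ω d(v⁰(x),v_n(x))^p dx ≤ δ_n^p. For each n let w_n ∈ A minimize F_n(w) := ∫_Ω d(w(x),v_n(x))^p dx + α(δ_n)·R(w) over A. Then ∫_Ω ‖w_n(x) − v⁰(x)‖^p dx → 0 and R(w_n) → R(v⁰) as n → ∞. -/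

import Mathlib

open MeasureTheory Filter Set
open scoped Topology ENNReal

/-- The double-integral regularizer
`R(w) = ∫_{Ω×Ω} d(w(x),w(y))^p ρ(x-y)/‖x-y‖^{N+ps}`. -/
noncomputable def regularizer {N M : ℕ}
    (Ω : Set (EuclideanSpace ℝ (Fin N))) (p s : ℝ)
    (d : EuclideanSpace ℝ (Fin M) → EuclideanSpace ℝ (Fin M) → ℝ)
    (ρ : EuclideanSpace ℝ (Fin N) → ℝ)
    (w : EuclideanSpace ℝ (Fin N) → EuclideanSpace ℝ (Fin M)) : ℝ≥0∞ :=
  ∫⁻ z in Ω ×ˢ Ω,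
    ENNReal.ofReal (d (w z.1) (w z.2)) ^ p * ENNReal.ofReal (ρ (z.1 - z.2)) /
      ENNReal.ofReal (‖z.1 - z.2‖ ^ ((N : ℝ) + p * s))

/-- The variational denoising functional `F^v(w) = ∫_Ω d(w,v)^p + α R(w)`. -/
noncomputable def denoisingFunctional {N M : ℕ}
    (Ω : Set (EuclideanSpace ℝ (Fin N))) (p s α : ℝ)
    (d : EuclideanSpace ℝ (Fin M) → EuclideanSpace ℝ (Fin M) → ℝ)
    (ρ : EuclideanSpace ℝ (Fin N) → ℝ)
    (v w : EuclideanSpace ℝ (Fin N) → EuclideanSpace ℝ (Fin M)) : ℝ≥0∞ :=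
  (∫⁻ x in Ω, ENNReal.ofReal (d (w x) (v x)) ^ p) +
    ENNReal.ofReal α * regularizer Ω p s d ρ w

lemma aux_abs_d_le {M : ℕ} {K : Set (EuclideanSpace ℝ (Fin M))}
    {d : EuclideanSpace ℝ (Fin M) → EuclideanSpace ℝ (Fin M) → ℝ}
    (hd_symm : ∀ a ∈ K, ∀ b ∈ K, d a b = d b a)
    (hd_tri : ∀ a ∈ K, ∀ b ∈ K, ∀ c ∈ K, d a c ≤ d a b + d b c)
    {C : ℝ}
    (hd_upper : ∀ a ∈ K, ∀ b ∈ K, d a b ≤ C * ‖a - b‖)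
    {a1 a2 b1 b2 : EuclideanSpace ℝ (Fin M)}
    (ha1 : a1 ∈ K) (ha2 : a2 ∈ K) (hb1 : b1 ∈ K) (hb2 : b2 ∈ K) :
    |d a1 a2 - d b1 b2| ≤ C * ‖a1 - b1‖ + C * ‖a2 - b2‖ := by
  have h1 : d a1 a2 ≤ d a1 b1 + d b1 a2 := hd_tri _ ha1 _ hb1 _ ha2
  have h2 : d b1 a2 ≤ d b1 b2 + d b2 a2 := hd_tri _ hb1 _ hb2 _ ha2
  have h3 : d b1 b2 ≤ d b1 a1 + d a1 b2 := hd_tri _ hb1 _ ha1 _ hb2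
  have h4 : d a1 b2 ≤ d a1 a2 + d a2 b2 := hd_tri _ ha1 _ ha2 _ hb2
  have e1 : d b1 a1 = d a1 b1 := hd_symm _ hb1 _ ha1
  have e2 : d b2 a2 = d a2 b2 := hd_symm _ hb2 _ ha2
  have u1 : d a1 b1 ≤ C * ‖a1 - b1‖ := hd_upper _ ha1 _ hb1
  have u2 : d a2 b2 ≤ C * ‖a2 - b2‖ := hd_upper _ ha2 _ hb2
  rw [abs_le]
  constructor <;> nlinarith [u1, u2]

lemma aux_d_measurable {M : ℕ} {K : Set (EuclideanSpace ℝ (Fin M))}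
    (hKcl : IsClosed K)
    {d : EuclideanSpace ℝ (Fin M) → EuclideanSpace ℝ (Fin M) → ℝ}
    (hd_symm : ∀ a ∈ K, ∀ b ∈ K, d a b = d b a)
    (hd_tri : ∀ a ∈ K, ∀ b ∈ K, ∀ c ∈ K, d a c ≤ d a b + d b c)
    {C : ℝ} (hC : 0 < C)
    (hd_upper : ∀ a ∈ K, ∀ b ∈ K, d a b ≤ C * ‖a - b‖)
    {γ : Type*} [MeasurableSpace γ] {u1 u2 : γ → EuclideanSpace ℝ (Fin M)}
    (h1 : Measurable u1) (h2 : Measurable u2)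
    (h1K : ∀ x, u1 x ∈ K) (h2K : ∀ x, u2 x ∈ K) :
    Measurable fun x => d (u1 x) (u2 x) := by
  set s : Set (EuclideanSpace ℝ (Fin M) × EuclideanSpace ℝ (Fin M)) := K ×ˢ K with hs
  have hcont : ContinuousOn (fun q : EuclideanSpace ℝ (Fin M) × EuclideanSpace ℝ (Fin M) =>
      d q.1 q.2) s := by
    rw [Metric.continuousOn_iff]
    rintro b ⟨hb1, hb2⟩ ε hε
    refine ⟨ε / (2 * C), by positivity, ?_⟩
    rintro a ⟨ha1, ha2⟩ hab
    have hd1 : dist a.1 b.1 ≤ dist a b := by rw [Prod.dist_eq]; exact le_max_left _ _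
    have hd2 : dist a.2 b.2 ≤ dist a b := by rw [Prod.dist_eq]; exact le_max_right _ _
    have habs := aux_abs_d_le hd_symm hd_tri hd_upper ha1 ha2 hb1 hb2
    rw [Real.dist_eq]
    rw [dist_eq_norm] at hd1 hd2
    have h2C : (0:ℝ) < 2 * C := by positivity
    have hlt : dist a b * (2 * C) < ε := (lt_div_iff₀ h2C).1 hab
    nlinarith [dist_nonneg (x := a) (y := b)]
  have hψ : Continuous (s.restrict fun q :
      EuclideanSpace ℝ (Fin M) × EuclideanSpace ℝ (Fin M) => d q.1 q.2) :=
    hcont.restrict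
  have hm : Measurable fun x : γ => (⟨(u1 x, u2 x), ⟨h1K x, h2K x⟩⟩ : s) :=
    (h1.prodMk h2).subtype_mk
  exact hψ.measurable.comp hm

lemma aux_liminf_mul_const {X : ℝ≥0∞} (hX : X ≠ ⊤) {Xk : ℕ → ℝ≥0∞}
    (h : Tendsto Xk atTop (𝓝 X)) (a : ℝ≥0∞) :
    X * a ≤ Filter.liminf (fun k => Xk k * a) atTop := by
  by_cases ha : a = ⊤
  · subst ha
    by_cases hX0 : X = 0
    · simp [hX0]
    · refine Filter.le_liminf_of_le (by isBoundedDefault) ?_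
      filter_upwards [h.eventually_ne hX0] with k hk
      simp [ENNReal.mul_top hk]
  · rw [(ENNReal.Tendsto.mul_const h (Or.inr ha)).liminf_eq]

lemma aux_add_rpow_le (x y : ℝ≥0∞) {p : ℝ} (hp : 0 ≤ p) :
    (x + y) ^ p ≤ 2 ^ p * (x ^ p + y ^ p) := by
  calc (x + y) ^ p ≤ (2 * max x y) ^ p := by
        apply ENNReal.rpow_le_rpow _ hp
        rw [two_mul]
        exact add_le_add (le_max_left _ _) (le_max_right _ _)
    _ = 2 ^ p * (max x y) ^ p := ENNReal.mul_rpow_of_nonneg _ _ hp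
    _ ≤ 2 ^ p * (x ^ p + y ^ p) := by
        gcongr
        rcases le_total x y with h | h
        · rw [max_eq_right h]; exact le_add_self
        · rw [max_eq_left h]; exact le_self_add

lemma aux_fatou {N M : ℕ} {Ω : Set (EuclideanSpace ℝ (Fin N))} (hΩm : MeasurableSet Ω)
    {p s : ℝ} (hp0 : 0 < p) (hNps : 0 ≤ (N : ℝ) + p * s)
    {K : Set (EuclideanSpace ℝ (Fin M))} (hKcl : IsClosed K) {k0 : EuclideanSpace ℝ (Fin M)}
    (hk0 : k0 ∈ K)
    {d : EuclideanSpace ℝ (Fin M) → EuclideanSpace ℝ (Fin M) → ℝ}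
    (hd_symm : ∀ a ∈ K, ∀ b ∈ K, d a b = d b a)
    (hd_tri : ∀ a ∈ K, ∀ b ∈ K, ∀ c ∈ K, d a c ≤ d a b + d b c)
    {C : ℝ} (hC : 0 < C)
    (hd_upper : ∀ a ∈ K, ∀ b ∈ K, d a b ≤ C * ‖a - b‖)
    {ρ : EuclideanSpace ℝ (Fin N) → ℝ} (hρcont : Continuous ρ)
    {v0 : EuclideanSpace ℝ (Fin N) → EuclideanSpace ℝ (Fin M)}
    (hv0 : Measurable v0) (hv0K : ∀ x ∈ Ω, v0 x ∈ K)
    {u : ℕ → EuclideanSpace ℝ (Fin N) → EuclideanSpace ℝ (Fin M)}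
    (hu : ∀ k, Measurable (u k)) (huK : ∀ k, ∀ x ∈ Ω, u k x ∈ K)
    (hL : ∀ k, (∫⁻ x in Ω, ENNReal.ofReal ‖u k x - v0 x‖ ^ p) ≤ (2 : ℝ≥0∞)⁻¹ ^ k) :
    regularizer Ω p s d ρ v0 ≤ liminf (fun k => regularizer Ω p s d ρ (u k)) atTop := by
  classical
  -- modified K-valued versions
  set U : ℕ → EuclideanSpace ℝ (Fin N) → EuclideanSpace ℝ (Fin M) :=
    fun k x => if x ∈ Ω then u k x else k0 with hUdef
  have hUm : ∀ k, Measurable (U k) := fun k => Measurable.ite hΩm (hu k) measurable_const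
  have hUK : ∀ k x, U k x ∈ K := by
    intro k x
    simp only [hUdef]
    split
    · exact huK k x ‹_›
    · exact hk0
  -- Borel-Cantelli: a.e. convergence on Ω
  have hg : ∀ k, Measurable fun x => ENNReal.ofReal ‖u k x - v0 x‖ ^ p := fun k =>
    ENNReal.continuous_rpow_const.measurable.comp ((hu k).sub hv0).norm.ennreal_ofReal
  have htsum : (∫⁻ x in Ω, ∑' k, ENNReal.ofReal ‖u k x - v0 x‖ ^ p) ≠ ⊤ := by
    rw [lintegral_tsum fun k => (hg k).aemeasurable]
    refine ne_top_of_le_ne_top ?_ (ENNReal.tsum_le_tsum hL)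
    rw [ENNReal.tsum_geometric]
    simp [ENNReal.one_sub_inv_two]
  have hae2 : ∀ᵐ x ∂(volume.restrict Ω), Tendsto (fun k => u k x) atTop (𝓝 (v0 x)) := by
    have hfin := ae_lt_top (Measurable.ennreal_tsum hg) htsum
    filter_upwards [hfin] with x hx
    have h1 : Tendsto (fun k => ENNReal.ofReal ‖u k x - v0 x‖ ^ p) atTop (𝓝 0) :=
      ENNReal.tendsto_atTop_zero_of_tsum_ne_top hx.ne
    have h2 : Tendsto (fun k => ENNReal.ofReal ‖u k x - v0 x‖) atTop (𝓝 0) := by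
      have h3 := h1.ennrpow_const p⁻¹
      have he : ∀ k, (ENNReal.ofReal ‖u k x - v0 x‖ ^ p) ^ p⁻¹ =
          ENNReal.ofReal ‖u k x - v0 x‖ := by
        intro k
        rw [← ENNReal.rpow_mul, mul_inv_cancel₀ hp0.ne', ENNReal.rpow_one]
      have h0 : ((0 : ℝ≥0∞) ^ p⁻¹) = 0 := by
        rw [ENNReal.zero_rpow_of_pos (by positivity)]
      rw [h0] at h3
      simpa only [he] using h3
    have h4 : Tendsto (fun k => ‖u k x - v0 x‖) atTop (𝓝 0) := by
      have := (ENNReal.tendsto_toReal (by simp)).comp h2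
      simpa [Function.comp_def, ENNReal.toReal_ofReal (norm_nonneg _)] using this
    exact tendsto_iff_norm_sub_tendsto_zero.2 h4
  -- transfer to the product
  set P : EuclideanSpace ℝ (Fin N) → Prop :=
    fun x => Tendsto (fun k => u k x) atTop (𝓝 (v0 x)) with hPdef
  have hbad : volume ({x | ¬ P x} ∩ Ω) = 0 := by
    rw [← Measure.restrict_apply' hΩm]
    exact ae_iff.1 hae2
  have haeP : ∀ᵐ z ∂(volume.restrict (Ω ×ˢ Ω)), P z.1 ∧ P z.2 := by
    rw [ae_iff, Measure.restrict_apply' (hΩm.prod hΩm)]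
    have hsub : {z : EuclideanSpace ℝ (Fin N) × EuclideanSpace ℝ (Fin N) |
        ¬(P z.1 ∧ P z.2)} ∩ Ω ×ˢ Ω ⊆
        (({x | ¬ P x} ∩ Ω) ×ˢ (univ : Set (EuclideanSpace ℝ (Fin N)))) ∪
          ((univ : Set (EuclideanSpace ℝ (Fin N))) ×ˢ ({x | ¬ P x} ∩ Ω)) := by
      rintro z ⟨hz, hz1, hz2⟩
      rw [Set.mem_setOf_eq, not_and_or] at hz
      rcases hz with h | h
      · exact Or.inl ⟨⟨h, hz1⟩, trivial⟩
      · exact Or.inr ⟨trivial, ⟨h, hz2⟩⟩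
    refine measure_mono_null hsub ?_
    rw [MeasureTheory.Measure.volume_eq_prod]
    refine le_antisymm ((measure_union_le _ _).trans ?_) zero_le
    rw [Measure.prod_prod, Measure.prod_prod, hbad]
    simp
  -- integrand
  set I : (EuclideanSpace ℝ (Fin N) → EuclideanSpace ℝ (Fin M)) →
      EuclideanSpace ℝ (Fin N) × EuclideanSpace ℝ (Fin N) → ℝ≥0∞ := fun f z =>
    ENNReal.ofReal (d (f z.1) (f z.2)) ^ p * ENNReal.ofReal (ρ (z.1 - z.2)) /
      ENNReal.ofReal (‖z.1 - z.2‖ ^ ((N : ℝ) + p * s)) with hIdef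
  have hreg : ∀ f, regularizer Ω p s d ρ f = ∫⁻ z in Ω ×ˢ Ω, I f z := fun f => by
    simp only [regularizer, hIdef]
  have hIaem : ∀ k, AEMeasurable (I (u k)) (volume.restrict (Ω ×ˢ Ω)) := by
    intro k
    have hdm : Measurable fun z : EuclideanSpace ℝ (Fin N) × EuclideanSpace ℝ (Fin N) =>
        d (U k z.1) (U k z.2) :=
      aux_d_measurable hKcl hd_symm hd_tri hC hd_upper
        ((hUm k).comp measurable_fst) ((hUm k).comp measurable_snd)
        (fun z => hUK _ _) (fun z => hUK _ _)
    have hρm : Measurable fun z : EuclideanSpace ℝ (Fin N) × EuclideanSpace ℝ (Fin N) =>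
        ENNReal.ofReal (ρ (z.1 - z.2)) :=
      (hρcont.comp (continuous_fst.sub continuous_snd)).measurable.ennreal_ofReal
    have hden : Measurable fun z : EuclideanSpace ℝ (Fin N) × EuclideanSpace ℝ (Fin N) =>
        ENNReal.ofReal (‖z.1 - z.2‖ ^ ((N : ℝ) + p * s)) := by
      have : Continuous fun z : EuclideanSpace ℝ (Fin N) × EuclideanSpace ℝ (Fin N) =>
          ‖z.1 - z.2‖ ^ ((N : ℝ) + p * s) :=
        (Real.continuous_rpow_const hNps).comp (continuous_fst.sub continuous_snd).norm
      exact this.measurable.ennreal_ofReal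
    have hm : Measurable (I (U k)) := by
      simp only [hIdef]
      exact ((ENNReal.continuous_rpow_const.measurable.comp hdm.ennreal_ofReal).mul hρm).div hden
    refine hm.aemeasurable.congr ?_
    filter_upwards [ae_restrict_mem (hΩm.prod hΩm)] with z hz
    simp only [hIdef, hUdef]
    rw [if_pos hz.1, if_pos hz.2]
  -- pointwise liminf inequality
  have hpt : ∀ᵐ z ∂(volume.restrict (Ω ×ˢ Ω)),
      I v0 z ≤ liminf (fun k => I (u k) z) atTop := by
    filter_upwards [haeP, ae_restrict_mem (hΩm.prod hΩm)] with z hP hzΩ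
    obtain ⟨hP1, hP2⟩ := hP
    obtain ⟨hz1, hz2⟩ := hzΩ
    have hdconv : Tendsto (fun k => d (u k z.1) (u k z.2)) atTop
        (𝓝 (d (v0 z.1) (v0 z.2))) := by
      have hb : Tendsto (fun k => C * ‖u k z.1 - v0 z.1‖ + C * ‖u k z.2 - v0 z.2‖)
          atTop (𝓝 0) := by
        have h1 := tendsto_iff_norm_sub_tendsto_zero.1 hP1
        have h2 := tendsto_iff_norm_sub_tendsto_zero.1 hP2
        simpa using (h1.const_mul C).add (h2.const_mul C)
      have habs : ∀ k, ‖d (u k z.1) (u k z.2) - d (v0 z.1) (v0 z.2)‖ ≤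
          C * ‖u k z.1 - v0 z.1‖ + C * ‖u k z.2 - v0 z.2‖ := fun k => by
        rw [Real.norm_eq_abs]
        exact aux_abs_d_le hd_symm hd_tri hd_upper (huK k _ hz1) (huK k _ hz2)
          (hv0K _ hz1) (hv0K _ hz2)
      exact tendsto_sub_nhds_zero_iff.1 (squeeze_zero_norm habs hb)
    have hXconv : Tendsto (fun k => ENNReal.ofReal (d (u k z.1) (u k z.2)) ^ p)
        atTop (𝓝 (ENNReal.ofReal (d (v0 z.1) (v0 z.2)) ^ p)) :=
      (ENNReal.tendsto_ofReal hdconv).ennrpow_const p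
    have hXne : (ENNReal.ofReal (d (v0 z.1) (v0 z.2)) ^ p) ≠ ⊤ :=
      ENNReal.rpow_ne_top_of_nonneg hp0.le ENNReal.ofReal_ne_top
    have hmain := aux_liminf_mul_const hXne hXconv
      (ENNReal.ofReal (ρ (z.1 - z.2)) / ENNReal.ofReal (‖z.1 - z.2‖ ^ ((N : ℝ) + p * s)))
    simp only [hIdef]
    simpa [mul_div_assoc] using hmain
  -- Fatou
  calc regularizer Ω p s d ρ v0
      = ∫⁻ z in Ω ×ˢ Ω, I v0 z := hreg v0
    _ ≤ ∫⁻ z in Ω ×ˢ Ω, liminf (fun k => I (u k) z) atTop := lintegral_mono_ae hpt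
    _ ≤ liminf (fun k => ∫⁻ z in Ω ×ˢ Ω, I (u k) z) atTop := lintegral_liminf_le' hIaem
    _ = liminf (fun k => regularizer Ω p s d ρ (u k)) atTop := by
        simp only [hreg]
/-- Convergence of variational denoising: for vanishing noise and a suitable
parameter choice `α(δ)`, minimizers converge in `L^p` to the exact data `v⁰`
and the regularizer values converge. -/
theorem denoising_convergence
    (N M : ℕ) (hN : 1 ≤ N) (hM : 1 ≤ M)
    (x₀ : EuclideanSpace ℝ (Fin N)) (r : ℝ) (hr : 0 < r)
    (p s : ℝ) (hp : 1 < p) (hs0 : 0 < s) (hs1 : s < 1)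
    (K : Set (EuclideanSpace ℝ (Fin M))) (hKne : K.Nonempty) (hKcl : IsClosed K)
    (d : EuclideanSpace ℝ (Fin M) → EuclideanSpace ℝ (Fin M) → ℝ)
    (hd_self : ∀ a ∈ K, d a a = 0)
    (hd_symm : ∀ a ∈ K, ∀ b ∈ K, d a b = d b a)
    (hd_tri : ∀ a ∈ K, ∀ b ∈ K, ∀ c ∈ K, d a c ≤ d a b + d b c)
    (C : ℝ) (hC : 1 ≤ C)
    (hd_lower : ∀ a ∈ K, ∀ b ∈ K, ‖a - b‖ ≤ d a b)
    (hd_upper : ∀ a ∈ K, ∀ b ∈ K, d a b ≤ C * ‖a - b‖)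
    (ρ : EuclideanSpace ℝ (Fin N) → ℝ) (hρcont : Continuous ρ) (hρ0 : ∀ z, 0 ≤ ρ z)
    (B : ℝ) (hρbd : ∀ z, ρ z ≤ B)
    (τ η : ℝ) (hτ : 0 < τ) (hη : 0 < η)
    (hlevel : {z : EuclideanSpace ℝ (Fin N) | τ ≤ ρ z} = Metric.closedBall 0 η)
    (v0 : EuclideanSpace ℝ (Fin N) → EuclideanSpace ℝ (Fin M))
    (hv0 : Measurable v0) (hv0K : ∀ x ∈ Metric.ball x₀ r, v0 x ∈ K)
    (hv0Lp : (∫⁻ x in Metric.ball x₀ r, ENNReal.ofReal ‖v0 x‖ ^ p) < ⊤)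
    (hv0R : regularizer (Metric.ball x₀ r) p s d ρ v0 < ⊤)
    (α : ℝ → ℝ) (hαpos : ∀ δ > 0, 0 < α δ)
    (hα0 : Tendsto α (𝓝[>] (0 : ℝ)) (𝓝 0))
    (hα1 : Tendsto (fun δ => δ ^ p / α δ) (𝓝[>] (0 : ℝ)) (𝓝 0))
    (δ : ℕ → ℝ) (hδpos : ∀ n, 0 < δ n) (hδ0 : Tendsto δ atTop (𝓝 0))
    (v : ℕ → EuclideanSpace ℝ (Fin N) → EuclideanSpace ℝ (Fin M))
    (hv : ∀ n, Measurable (v n)) (hvK : ∀ n, ∀ x ∈ Metric.ball x₀ r, v n x ∈ K)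
    (hvLp : ∀ n, (∫⁻ x in Metric.ball x₀ r, ENNReal.ofReal ‖v n x‖ ^ p) < ⊤)
    (hnoise : ∀ n,
      (∫⁻ x in Metric.ball x₀ r, ENNReal.ofReal (d (v0 x) (v n x)) ^ p) ≤
        ENNReal.ofReal (δ n ^ p))
    (w : ℕ → EuclideanSpace ℝ (Fin N) → EuclideanSpace ℝ (Fin M))
    (hw : ∀ n, Measurable (w n)) (hwK : ∀ n, ∀ x ∈ Metric.ball x₀ r, w n x ∈ K)
    (hwLp : ∀ n, (∫⁻ x in Metric.ball x₀ r, ENNReal.ofReal ‖w n x‖ ^ p) < ⊤)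
    (hwmin : ∀ n, ∀ u : EuclideanSpace ℝ (Fin N) → EuclideanSpace ℝ (Fin M),
      Measurable u → (∀ x ∈ Metric.ball x₀ r, u x ∈ K) →
      (∫⁻ x in Metric.ball x₀ r, ENNReal.ofReal ‖u x‖ ^ p) < ⊤ →
      denoisingFunctional (Metric.ball x₀ r) p s (α (δ n)) d ρ (v n) (w n) ≤
        denoisingFunctional (Metric.ball x₀ r) p s (α (δ n)) d ρ (v n) u) :
    Tendsto (fun n => ∫⁻ x in Metric.ball x₀ r, ENNReal.ofReal ‖w n x - v0 x‖ ^ p)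
        atTop (𝓝 0) ∧
      Tendsto (fun n => regularizer (Metric.ball x₀ r) p s d ρ (w n)) atTop
        (𝓝 (regularizer (Metric.ball x₀ r) p s d ρ v0)) := by
  classical
  obtain ⟨k0, hk0⟩ := hKne
  have hΩm : MeasurableSet (Metric.ball x₀ r) := measurableSet_ball
  have hp0 : (0:ℝ) < p := one_pos.trans hp
  have hC0 : (0:ℝ) < C := lt_of_lt_of_le one_pos hC
  have hdnn : ∀ a ∈ K, ∀ b ∈ K, 0 ≤ d a b := fun a ha b hb =>
    (norm_nonneg _).trans (hd_lower a ha b hb)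
  have h2pne : (2:ℝ≥0∞) ^ p ≠ ⊤ := ENNReal.rpow_ne_top_of_nonneg hp0.le (by norm_num)
  have hNps : (0:ℝ) ≤ (N : ℝ) + p * s := by
    have h1 : (0:ℝ) < p * s := mul_pos hp0 hs0
    have h2 : (0:ℝ) ≤ (N : ℝ) := Nat.cast_nonneg N
    linarith
  -- abbreviations
  set L : ℕ → ℝ≥0∞ :=
    fun n => ∫⁻ x in Metric.ball x₀ r, ENNReal.ofReal ‖w n x - v0 x‖ ^ p with hLdef
  set A : ℕ → ℝ≥0∞ :=
    fun n => ∫⁻ x in Metric.ball x₀ r, ENNReal.ofReal (d (w n x) (v n x)) ^ p with hAdef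
  set Breg : ℕ → ℝ≥0∞ := fun n => regularizer (Metric.ball x₀ r) p s d ρ (w n) with hBdef
  set R0 : ℝ≥0∞ := regularizer (Metric.ball x₀ r) p s d ρ v0 with hR0def
  -- minimization inequality
  have hkey : ∀ n, A n + ENNReal.ofReal (α (δ n)) * Breg n ≤
      ENNReal.ofReal (δ n ^ p) + ENNReal.ofReal (α (δ n)) * R0 := by
    intro n
    have h := hwmin n v0 hv0 hv0K hv0Lp
    simp only [denoisingFunctional] at h
    simp only [hAdef, hBdef, hR0def]
    exact h.trans (add_le_add_left (hnoise n) _)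
  -- limits of the parameters
  have hδW : Tendsto δ atTop (𝓝[>] (0:ℝ)) :=
    tendsto_nhdsWithin_of_tendsto_nhds_of_eventually_within δ hδ0
      (Eventually.of_forall fun n => hδpos n)
  have hαn : Tendsto (fun n => α (δ n)) atTop (𝓝 0) := hα0.comp hδW
  have hqn : Tendsto (fun n => δ n ^ p / α (δ n)) atTop (𝓝 0) := hα1.comp hδW
  have hδp : Tendsto (fun n => δ n ^ p) atTop (𝓝 0) := by
    have he : (fun n => δ n ^ p) = fun n => (δ n ^ p / α (δ n)) * α (δ n) := by
      funext n; rw [div_mul_cancel₀]; exact (hαpos _ (hδpos n)).ne'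
    rw [he]
    simpa using hqn.mul hαn
  have hδpE : Tendsto (fun n => ENNReal.ofReal (δ n ^ p)) atTop (𝓝 0) := by
    simpa using ENNReal.tendsto_ofReal hδp
  have hαE : Tendsto (fun n => ENNReal.ofReal (α (δ n))) atTop (𝓝 0) := by
    simpa using ENNReal.tendsto_ofReal hαn
  have hαR : Tendsto (fun n => ENNReal.ofReal (α (δ n)) * R0) atTop (𝓝 0) := by
    simpa using ENNReal.Tendsto.mul_const hαE (Or.inr hv0R.ne)
  have hAle : ∀ n, A n ≤ ENNReal.ofReal (δ n ^ p) + ENNReal.ofReal (α (δ n)) * R0 :=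
    fun n => le_trans le_self_add (hkey n)
  -- AEMeasurability of the fidelity integrand
  have hXaem : ∀ n, AEMeasurable (fun x => ENNReal.ofReal (d (w n x) (v n x)) ^ p)
      (volume.restrict (Metric.ball x₀ r)) := by
    intro n
    have hWm : Measurable (fun x => if x ∈ Metric.ball x₀ r then w n x else k0) :=
      Measurable.ite hΩm (hw n) measurable_const
    have hVm : Measurable (fun x => if x ∈ Metric.ball x₀ r then v n x else k0) :=
      Measurable.ite hΩm (hv n) measurable_const
    have hWK : ∀ x, (if x ∈ Metric.ball x₀ r then w n x else k0) ∈ K := by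
      intro x; split
      · exact hwK n x ‹_›
      · exact hk0
    have hVK : ∀ x, (if x ∈ Metric.ball x₀ r then v n x else k0) ∈ K := by
      intro x; split
      · exact hvK n x ‹_›
      · exact hk0
    have hdm : Measurable fun x => d (if x ∈ Metric.ball x₀ r then w n x else k0)
        (if x ∈ Metric.ball x₀ r then v n x else k0) :=
      aux_d_measurable hKcl hd_symm hd_tri hC0 hd_upper hWm hVm hWK hVK
    have hm : Measurable fun x => ENNReal.ofReal (d (if x ∈ Metric.ball x₀ r then w n x else k0)
        (if x ∈ Metric.ball x₀ r then v n x else k0)) ^ p :=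
      ENNReal.continuous_rpow_const.measurable.comp hdm.ennreal_ofReal
    refine hm.aemeasurable.congr ?_
    filter_upwards [ae_restrict_mem hΩm] with x hx
    rw [if_pos hx, if_pos hx]
  -- L^p bound and first conclusion
  have hptL : ∀ n, L n ≤ 2 ^ p * (A n + ENNReal.ofReal (δ n ^ p)) := by
    intro n
    have hpt : ∀ᵐ x ∂(volume.restrict (Metric.ball x₀ r)),
        ENNReal.ofReal ‖w n x - v0 x‖ ^ p ≤
          2 ^ p * (ENNReal.ofReal (d (w n x) (v n x)) ^ p +
            ENNReal.ofReal (d (v0 x) (v n x)) ^ p) := by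
      filter_upwards [ae_restrict_mem hΩm] with x hx
      have hwK' := hwK n x hx
      have hvK' := hvK n x hx
      have hv0K' := hv0K x hx
      have h1 : ‖w n x - v0 x‖ ≤ d (w n x) (v n x) + d (v0 x) (v n x) := by
        have t1 : ‖w n x - v0 x‖ ≤ d (w n x) (v0 x) := hd_lower _ hwK' _ hv0K'
        have t2 : d (w n x) (v0 x) ≤ d (w n x) (v n x) + d (v n x) (v0 x) :=
          hd_tri _ hwK' _ hvK' _ hv0K'
        have t3 : d (v n x) (v0 x) = d (v0 x) (v n x) := hd_symm _ hvK' _ hv0K'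
        linarith
      calc ENNReal.ofReal ‖w n x - v0 x‖ ^ p
          ≤ (ENNReal.ofReal (d (w n x) (v n x)) + ENNReal.ofReal (d (v0 x) (v n x))) ^ p := by
            apply ENNReal.rpow_le_rpow _ hp0.le
            rw [← ENNReal.ofReal_add (hdnn _ hwK' _ hvK') (hdnn _ hv0K' _ hvK')]
            exact ENNReal.ofReal_le_ofReal h1
        _ ≤ 2 ^ p * (ENNReal.ofReal (d (w n x) (v n x)) ^ p +
              ENNReal.ofReal (d (v0 x) (v n x)) ^ p) := aux_add_rpow_le _ _ hp0.le
    calc L n ≤ ∫⁻ x in Metric.ball x₀ r,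
          2 ^ p * (ENNReal.ofReal (d (w n x) (v n x)) ^ p +
            ENNReal.ofReal (d (v0 x) (v n x)) ^ p) := by
          rw [hLdef]; exact lintegral_mono_ae hpt
      _ = 2 ^ p * (A n + ∫⁻ x in Metric.ball x₀ r, ENNReal.ofReal (d (v0 x) (v n x)) ^ p) := by
          rw [lintegral_const_mul' _ _ h2pne, lintegral_add_left' (hXaem n), hAdef]
      _ ≤ 2 ^ p * (A n + ENNReal.ofReal (δ n ^ p)) := by
          exact mul_le_mul_right (add_le_add_right (hnoise n) _) _
  have hconc1 : Tendsto L atTop (𝓝 0) := by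
    have hub : Tendsto (fun n => 2 ^ p * (ENNReal.ofReal (δ n ^ p) +
        ENNReal.ofReal (α (δ n)) * R0 + ENNReal.ofReal (δ n ^ p))) atTop (𝓝 0) := by
      have h0 : Tendsto (fun n => ENNReal.ofReal (δ n ^ p) +
          ENNReal.ofReal (α (δ n)) * R0 + ENNReal.ofReal (δ n ^ p)) atTop (𝓝 0) := by
        simpa using (hδpE.add hαR).add hδpE
      simpa using ENNReal.Tendsto.const_mul h0 (Or.inr h2pne)
    refine tendsto_of_tendsto_of_tendsto_of_le_of_le tendsto_const_nhds hub
      (fun n => zero_le) (fun n => ?_)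
    exact (hptL n).trans (mul_le_mul_right (add_le_add_left (hAle n) _) _)
  -- bound on the regularizer values
  have hBle : ∀ n, Breg n ≤ ENNReal.ofReal (δ n ^ p / α (δ n)) + R0 := by
    intro n
    have hα' : 0 < α (δ n) := hαpos _ (hδpos n)
    have ha0 : ENNReal.ofReal (α (δ n)) ≠ 0 := (ENNReal.ofReal_pos.2 hα').ne'
    have hatop : ENNReal.ofReal (α (δ n)) ≠ ⊤ := ENNReal.ofReal_ne_top
    have h1 : ENNReal.ofReal (α (δ n)) * Breg n ≤
        ENNReal.ofReal (δ n ^ p) + ENNReal.ofReal (α (δ n)) * R0 :=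
      le_trans le_add_self (hkey n)
    calc Breg n = (ENNReal.ofReal (α (δ n)))⁻¹ * (ENNReal.ofReal (α (δ n)) * Breg n) := by
          rw [← mul_assoc, ENNReal.inv_mul_cancel ha0 hatop, one_mul]
      _ ≤ (ENNReal.ofReal (α (δ n)))⁻¹ *
            (ENNReal.ofReal (δ n ^ p) + ENNReal.ofReal (α (δ n)) * R0) :=
          mul_le_mul_right h1 _
      _ = (ENNReal.ofReal (α (δ n)))⁻¹ * ENNReal.ofReal (δ n ^ p) +
            (ENNReal.ofReal (α (δ n)))⁻¹ * (ENNReal.ofReal (α (δ n)) * R0) := by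
          rw [mul_add]
      _ = ENNReal.ofReal (δ n ^ p / α (δ n)) + R0 := by
          rw [← mul_assoc, ENNReal.inv_mul_cancel ha0 hatop, one_mul,
            ENNReal.ofReal_div_of_pos hα', ENNReal.div_eq_inv_mul]
  have hU : Tendsto (fun n => ENNReal.ofReal (δ n ^ p / α (δ n)) + R0) atTop (𝓝 R0) := by
    have := (ENNReal.tendsto_ofReal hqn).add (tendsto_const_nhds (x := R0))
    simpa using this
  -- second conclusion via subsequences
  have hconc2 : Tendsto Breg atTop (𝓝 R0) := by
    refine tendsto_of_subseq_tendsto fun ns hns => ?_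
    have hLns : Tendsto (fun j => L (ns j)) atTop (𝓝 0) := hconc1.comp hns
    have hsel : ∀ k : ℕ, ∃ Nk : ℕ, ∀ j ≥ Nk, L (ns j) ≤ (2:ℝ≥0∞)⁻¹ ^ k := by
      intro k
      have hpos : (0:ℝ≥0∞) < 2⁻¹ ^ k := ENNReal.pow_pos (ENNReal.inv_pos.2 (by norm_num)) k
      have hev := hLns.eventually_lt_const hpos
      rcases eventually_atTop.1 hev with ⟨Nk, hNk⟩
      exact ⟨Nk, fun j hj => (hNk j hj).le⟩
    choose Nk hNk using hsel
    set ms : ℕ → ℕ := fun k => max k (Nk k) with hmsdef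
    have hms : Tendsto ms atTop atTop :=
      tendsto_atTop_mono (fun k => le_max_left _ _) tendsto_id
    refine ⟨ms, ?_⟩
    have hφ : Tendsto (fun k => ns (ms k)) atTop atTop := hns.comp hms
    have hLφ : ∀ k, (∫⁻ x in Metric.ball x₀ r,
        ENNReal.ofReal ‖w (ns (ms k)) x - v0 x‖ ^ p) ≤ (2:ℝ≥0∞)⁻¹ ^ k := by
      intro k
      have := hNk k (ms k) (le_max_right _ _)
      simpa only [hLdef] using this
    have hliminf : R0 ≤ liminf (fun k => Breg (ns (ms k))) atTop := by
      have h := aux_fatou hΩm hp0 hNps hKcl hk0 hd_symm hd_tri hC0 hd_upper hρcont hv0 hv0K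
        (u := fun k => w (ns (ms k))) (fun k => hw _) (fun k => hwK _) hLφ
      simpa only [hR0def, hBdef] using h
    have hlimsup : limsup (fun k => Breg (ns (ms k))) atTop ≤ R0 := by
      refine le_trans (limsup_le_limsup (Eventually.of_forall fun k => hBle (ns (ms k)))) ?_
      exact (hU.comp hφ).limsup_eq.le
    exact tendsto_of_le_liminf_of_limsup_le hliminf hlimsup
  exact ⟨hconc1, hconc2⟩
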